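/- arXiv:1712.07550 — 8 statements merged into one kernel-verified Lean document; each statement's English description precedes it below -/
import Mathlib

section
/- Let A1, A2 be commuting n×n complex matrices. A pair (λ1, λ2) ∈ ℂ² is a joint eigenvalue of (A1, A2) (i.e., there exists a nonzero vector v with A1 v = λ1 v and A2 v = λ2 v) if and only if for all ξ1, ξ2 ∈ ℂ, the matrix ξ1(λ1 I − A1) + ξ2(λ2 I − A2) is not invertible. -/
/-!
If `(λ₁, λ₂)` is a joint eigenvalue with eigenvector `v`, every combination
`ξ₁ (λ₁ - A₁) + ξ₂ (λ₂ - A₂)` kills `v`. Conversely, if such a combination `T` is singular, its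
kernel is invariant under the commuting maps `A₁, A₂`, hence contains a common eigenvector, with
eigenvalues `(μ, ν)` satisfying `ξ₁ (λ₁ - μ) + ξ₂ (λ₂ - ν) = 0`. There are finitely many joint
eigenvalues, so unless `(μ, ν) = (λ₁, λ₂)` is one of them, the choice `ξ = (c, 1)` with `c` outside
a finite set makes `T` invertible.
-/

open Set

namespace Module.End

variable {K V : Type*} [Field K] [AddCommGroup V] [Module K V]

def HasJointEigenvalue (f g : End K V) (μ ν : K) : Prop :=
  ∃ v : V, v ≠ 0 ∧ f v = μ • v ∧ g v = ν • v

lemma finite_setOf_hasJointEigenvalue [FiniteDimensional K V] (f g : End K V) :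
    {p : K × K | HasJointEigenvalue f g p.1 p.2}.Finite :=
  (f.finite_hasEigenvalue.prod g.finite_hasEigenvalue).subset
    fun _ ⟨_, hv, hfv, hgv⟩ =>
      ⟨hasEigenvalue_of_hasEigenvector ⟨mem_eigenspace_iff.mpr hfv, hv⟩,
        hasEigenvalue_of_hasEigenvector ⟨mem_eigenspace_iff.mpr hgv, hv⟩⟩

lemma combination_apply_of_eq_smul {f g : End K V} {μ ν : K} {v : V}
    (hf : f v = μ • v) (hg : g v = ν • v) (l₁ l₂ ξ₁ ξ₂ : K) :
    (ξ₁ • (l₁ • 1 - f) + ξ₂ • (l₂ • 1 - g)) v = (ξ₁ * (l₁ - μ) + ξ₂ * (l₂ - ν)) • v := by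
  simp only [LinearMap.add_apply, LinearMap.smul_apply, LinearMap.sub_apply, one_apply, hf, hg]
  module

lemma HasJointEigenvalue.not_isUnit_combination {f g : End K V} {l₁ l₂ : K}
    (h : HasJointEigenvalue f g l₁ l₂) (ξ₁ ξ₂ : K) :
    ¬ IsUnit (ξ₁ • (l₁ • 1 - f) + ξ₂ • (l₂ • 1 - g)) := by
  obtain ⟨v, hv, hfv, hgv⟩ := h
  intro hT
  refine hv (((isUnit_iff _).mp hT).injective ?_)
  rw [combination_apply_of_eq_smul hfv hgv, map_zero]
  simp

lemma mapsTo_ker_of_commute {f T : End K V} (h : Commute f T) :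
    MapsTo f (LinearMap.ker T) (LinearMap.ker T) := fun x hx => by
  rw [SetLike.mem_coe, LinearMap.mem_ker] at hx ⊢
  rw [← mul_apply, ← h.eq, mul_apply, hx, map_zero]

variable [IsAlgClosed K] [FiniteDimensional K V]

lemma exists_inf_eigenspace_ne_bot {f : End K V} {p : Submodule K V} (hp : p ≠ ⊥)
    (hf : MapsTo f p p) : ∃ μ, p ⊓ f.eigenspace μ ≠ ⊥ := by
  have : Nontrivial p := Submodule.nontrivial_iff_ne_bot.mpr hp
  obtain ⟨μ, hμ⟩ := exists_eigenvalue (f.restrict hf)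
  obtain ⟨x, hx, hx0⟩ := hμ.exists_hasEigenvector
  have hfx : f x = μ • (x : V) := congrArg Subtype.val (mem_eigenspace_iff.mp hx)
  exact ⟨μ, (Submodule.ne_bot_iff _).mpr
    ⟨x, ⟨x.2, mem_eigenspace_iff.mpr hfx⟩, by simpa using hx0⟩⟩

lemma exists_common_eigenvector_mem {f g : End K V} (hfg : Commute f g) {p : Submodule K V}
    (hp : p ≠ ⊥) (hf : MapsTo f p p) (hg : MapsTo g p p) :
    ∃ μ ν : K, ∃ v ∈ p, v ≠ 0 ∧ f v = μ • v ∧ g v = ν • v := by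
  obtain ⟨μ, hμ⟩ := exists_inf_eigenspace_ne_bot hp hf
  have hgμ : MapsTo g (p ⊓ f.eigenspace μ : Submodule K V) (p ⊓ f.eigenspace μ : Submodule K V) :=
    fun x hx => ⟨hg hx.1, mapsTo_genEigenspace_of_comm hfg μ 1 hx.2⟩
  obtain ⟨ν, hν⟩ := exists_inf_eigenspace_ne_bot hμ hgμ
  obtain ⟨v, ⟨⟨hvp, hvf⟩, hvg⟩, hv0⟩ := (Submodule.ne_bot_iff _).mp hν
  exact ⟨μ, ν, v, hvp, hv0, mem_eigenspace_iff.mp hvf, mem_eigenspace_iff.mp hvg⟩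

lemma exists_hasJointEigenvalue_of_not_isUnit {f g : End K V} (hfg : Commute f g)
    {l₁ l₂ ξ₁ ξ₂ : K} (hT : ¬ IsUnit (ξ₁ • (l₁ • 1 - f) + ξ₂ • (l₂ • 1 - g))) :
    ∃ μ ν, HasJointEigenvalue f g μ ν ∧ ξ₁ * (l₁ - μ) + ξ₂ * (l₂ - ν) = 0 := by
  set T := ξ₁ • (l₁ • 1 - f) + ξ₂ • (l₂ • 1 - g)
  have hker : LinearMap.ker T ≠ ⊥ := by rwa [Ne, ← LinearMap.isUnit_iff_ker_eq_bot]
  have hcommT : ∀ h : End K V, Commute h f → Commute h g → Commute h T := fun h hf hg =>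
    ((((Commute.one_right h).smul_right l₁).sub_right hf).smul_right ξ₁).add_right
      ((((Commute.one_right h).smul_right l₂).sub_right hg).smul_right ξ₂)
  obtain ⟨μ, ν, v, hvT, hv0, hfv, hgv⟩ :=
    exists_common_eigenvector_mem hfg hker
      (mapsTo_ker_of_commute (hcommT f (.refl f) hfg))
      (mapsTo_ker_of_commute (hcommT g hfg.symm (.refl g)))
  rw [LinearMap.mem_ker, combination_apply_of_eq_smul hfv hgv, smul_eq_zero] at hvT
  exact ⟨μ, ν, ⟨v, hv0, hfv, hgv⟩, hvT.resolve_right hv0⟩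

lemma exists_isUnit_combination_of_not_hasJointEigenvalue {f g : End K V} (hfg : Commute f g)
    {l₁ l₂ : K} (h : ¬ HasJointEigenvalue f g l₁ l₂) :
    ∃ c : K, IsUnit (c • (l₁ • 1 - f) + (1 : K) • (l₂ • 1 - g)) := by
  -- `c (l₁ - μ) + (l₂ - ν) = 0` forces `c = (ν - l₂) / (l₁ - μ)` unless `(μ, ν) = (l₁, l₂)`.
  obtain ⟨c, hc⟩ := ((finite_setOf_hasJointEigenvalue f g).image
    fun p => (p.2 - l₂) / (l₁ - p.1)).infinite_compl.nonempty
  refine ⟨c, by_contra fun hT => ?_⟩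
  obtain ⟨μ, ν, hμν, hzero⟩ := exists_hasJointEigenvalue_of_not_isUnit hfg hT
  by_cases hμ : μ = l₁
  · subst hμ
    obtain rfl : ν = l₂ := by simpa [sub_eq_zero, eq_comm] using hzero
    exact h hμν
  · refine hc ⟨(μ, ν), hμν, ?_⟩
    have : l₁ - μ ≠ 0 := sub_ne_zero.mpr (Ne.symm hμ)
    field_simp
    linear_combination -hzero

theorem hasJointEigenvalue_iff_forall_not_isUnit {f g : End K V} (hfg : Commute f g)
    (l₁ l₂ : K) : HasJointEigenvalue f g l₁ l₂ ↔
      ∀ ξ₁ ξ₂ : K, ¬ IsUnit (ξ₁ • (l₁ • 1 - f) + ξ₂ • (l₂ • 1 - g)) := by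
  refine ⟨HasJointEigenvalue.not_isUnit_combination, fun h => by_contra fun hl => ?_⟩
  obtain ⟨c, hc⟩ := exists_isUnit_combination_of_not_hasJointEigenvalue hfg hl
  exact h c 1 hc

end Module.End

/-- For commuting n×n complex matrices, (λ1, λ2) is a joint eigenvalue
iff every linear combination ξ1(λ1 I − A1) + ξ2(λ2 I − A2) fails to be invertible. -/
theorem joint_spectrum_characterization {n : ℕ}
    (A1 A2 : Matrix (Fin n) (Fin n) ℂ) (hcomm : A1 * A2 = A2 * A1) (l1 l2 : ℂ) :
    (∃ v : Fin n → ℂ, v ≠ 0 ∧ A1.mulVec v = l1 • v ∧ A2.mulVec v = l2 • v) ↔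
      ∀ ξ1 ξ2 : ℂ,
        ¬ IsUnit (ξ1 • (l1 • (1 : Matrix (Fin n) (Fin n) ℂ) - A1) +
            ξ2 • (l2 • (1 : Matrix (Fin n) (Fin n) ℂ) - A2)) := by
  let E := Matrix.toLinAlgEquiv' (R := ℂ) (n := Fin n)
  have key := Module.End.hasJointEigenvalue_iff_forall_not_isUnit
    (f := E A1) (g := E A2) (by rw [Commute, SemiconjBy, ← map_mul, ← map_mul, hcomm]) l1 l2
  simp only [← map_one E, ← map_smul, ← map_sub, ← map_add, isUnit_map_iff] at key
  exact key
end

section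
/- Suppose A1 A2 = A2 A1, A1 B̃ σ2 − A2 B̃ σ1 + B̃ γ = 0, σ2 F A1 − σ1 F A2 + γ F = 0, and σ1 F B̃ σ2 − σ2 F B̃ σ1 = 0. Then the matrices A1 + B̃ σ1 F and A2 + B̃ σ2 F commute. -/
/-- under the vessel conditions (A1), (A2) and the feedback
admissibility conditions, the closed-loop main operators commute. -/
theorem closed_loop_commute {h e et : ℕ}
    (A1 A2 : Matrix (Fin h) (Fin h) ℂ) (B : Matrix (Fin h) (Fin et) ℂ)
    (σ1 σ2 γ : Matrix (Fin et) (Fin e) ℂ) (F : Matrix (Fin e) (Fin h) ℂ)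
    (hA1 : A1 * A2 = A2 * A1)
    (hA2 : A1 * B * σ2 - A2 * B * σ1 + B * γ = 0)
    (hF1 : σ2 * F * A1 - σ1 * F * A2 + γ * F = 0)
    (hF2 : σ1 * F * B * σ2 - σ2 * F * B * σ1 = 0) :
    (A1 + B * σ1 * F) * (A2 + B * σ2 * F) = (A2 + B * σ2 * F) * (A1 + B * σ1 * F) := by
  have key : (A1 + B * σ1 * F) * (A2 + B * σ2 * F) - (A2 + B * σ2 * F) * (A1 + B * σ1 * F)
      = (A1 * A2 - A2 * A1) + (A1 * B * σ2 - A2 * B * σ1 + B * γ) * F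
        - B * (σ2 * F * A1 - σ1 * F * A2 + γ * F)
        + B * (σ1 * F * B * σ2 - σ2 * F * B * σ1) * F := by
    simp only [Matrix.mul_add, Matrix.add_mul, Matrix.sub_mul, Matrix.mul_sub, Matrix.mul_assoc, Matrix.mul_smul, Matrix.smul_mul]; abel
  rw [hA1, hA2, hF1, hF2] at key
  simp at key
  exact sub_eq_zero.mp key
end

section
/- Assume the vessel conditions: σ2* C A1 − σ1* C A2 + γ* C = 0; σ1* D = D̃ σ1; σ2* D = D̃ σ2; γ* D = D̃ γ + σ1* C B̃ σ2 − σ2* C B̃ σ1; and the feedback conditions σ2 F A1 − σ1 F A2 + γ F = 0 and σ1 F B̃ σ2 − σ2 F B̃ σ1 = 0. Then σ2*(C + DF)(A1 + B̃ σ1 F) − σ1*(C + DF)(A2 + B̃ σ2 F) + γ*(C + DF) = 0. -/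
/-- the closed-loop output data satisfies the output vessel condition (A3). -/
theorem closed_loop_output_condition {h e et es est : ℕ}
    (A1 A2 : Matrix (Fin h) (Fin h) ℂ) (B : Matrix (Fin h) (Fin et) ℂ)
    (σ1 σ2 γ : Matrix (Fin et) (Fin e) ℂ)
    (C : Matrix (Fin es) (Fin h) ℂ) (D : Matrix (Fin es) (Fin e) ℂ)
    (Dt : Matrix (Fin est) (Fin et) ℂ)
    (σ1s σ2s γs : Matrix (Fin est) (Fin es) ℂ)
    (F : Matrix (Fin e) (Fin h) ℂ)
    (hA3 : σ2s * C * A1 - σ1s * C * A2 + γs * C = 0)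
    (hA4a : σ1s * D = Dt * σ1)
    (hA4b : σ2s * D = Dt * σ2)
    (hA4c : γs * D = Dt * γ + σ1s * C * B * σ2 - σ2s * C * B * σ1)
    (hF1 : σ2 * F * A1 - σ1 * F * A2 + γ * F = 0)
    (hF2 : σ1 * F * B * σ2 - σ2 * F * B * σ1 = 0) :
    σ2s * (C + D * F) * (A1 + B * σ1 * F) - σ1s * (C + D * F) * (A2 + B * σ2 * F)
      + γs * (C + D * F) = 0 := by
  have key : σ2s * (C + D * F) * (A1 + B * σ1 * F) - σ1s * (C + D * F) * (A2 + B * σ2 * F)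
      + γs * (C + D * F)
      = (σ2s * C * A1 - σ1s * C * A2 + γs * C)
        + Dt * (σ2 * F * A1 - σ1 * F * A2 + γ * F)
        - Dt * ((σ1 * F * B * σ2 - σ2 * F * B * σ1) * F)
        + (σ2s * D - Dt * σ2) * (F * A1)
        - (σ1s * D - Dt * σ1) * (F * A2)
        + (γs * D - (Dt * γ + σ1s * C * B * σ2 - σ2s * C * B * σ1)) * F
        + (σ2s * D - Dt * σ2) * (F * (B * (σ1 * F)))
        - (σ1s * D - Dt * σ1) * (F * (B * (σ2 * F))) := by
    simp only [Matrix.mul_sub, Matrix.sub_mul, Matrix.mul_add, Matrix.add_mul, Matrix.mul_assoc]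
    abel
  rw [key, hA3, hF1, hF2, hA4a, hA4b, hA4c]
  simp
end

section
/- Assume σ1* D = D̃ σ1, σ2* D = D̃ σ2, γ* D = D̃ γ + σ1* C B̃ σ2 − σ2* C B̃ σ1, and σ1 F B̃ σ2 − σ2 F B̃ σ1 = 0. Then γ* D = D̃ γ + σ1*(C + DF) B̃ σ2 − σ2*(C + DF) B̃ σ1; i.e., the closed-loop output map C + DF satisfies the linkage vessel condition (A4) with the same D, D̃, γ, γ*. -/
/-- the closed-loop output map C + DF satisfies the linkage
vessel condition (A4) with the same D, D̃, γ, γ*. -/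
theorem closed_loop_linkage_condition {h e et es est : ℕ}
    (B : Matrix (Fin h) (Fin et) ℂ)
    (σ1 σ2 γ : Matrix (Fin et) (Fin e) ℂ)
    (C : Matrix (Fin es) (Fin h) ℂ) (D : Matrix (Fin es) (Fin e) ℂ)
    (Dt : Matrix (Fin est) (Fin et) ℂ)
    (σ1s σ2s γs : Matrix (Fin est) (Fin es) ℂ)
    (F : Matrix (Fin e) (Fin h) ℂ)
    (hA4a : σ1s * D = Dt * σ1)
    (hA4b : σ2s * D = Dt * σ2)
    (hA4c : γs * D = Dt * γ + σ1s * C * B * σ2 - σ2s * C * B * σ1)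
    (hF2 : σ1 * F * B * σ2 - σ2 * F * B * σ1 = 0) :
    γs * D = Dt * γ + σ1s * (C + D * F) * B * σ2 - σ2s * (C + D * F) * B * σ1 := by
  have h1 : σ1s * (C + D * F) * B * σ2 - σ2s * (C + D * F) * B * σ1
      = (σ1s * C * B * σ2 - σ2s * C * B * σ1)
        + Dt * (σ1 * F * B * σ2 - σ2 * F * B * σ1) := by
    simp only [Matrix.mul_add, Matrix.add_mul, Matrix.mul_sub, ← Matrix.mul_assoc,
      hA4a, hA4b]
    abel
  rw [add_sub_assoc, h1, hF2, Matrix.mul_zero, add_zero, ← add_sub_assoc, hA4c]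
end

section
/- Suppose the matrices N, M, V, C, D, F satisfy M + V F = N, with N and M invertible. Set S = D + C N⁻¹ V, T = D + (C + D F) M⁻¹ V, and R⁻¹ = I + F M⁻¹ V. Then T = S · R⁻¹, i.e., (D + C N⁻¹ V)(I + F M⁻¹ V) = D + (C + D F) M⁻¹ V. -/
/-- algebraic core of the factorization S = T ∘ R, i.e. S·R⁻¹ = T:
(D + C N⁻¹ V)(1 + F M⁻¹ V) = D + (C + D F) M⁻¹ V when M + V F = N. -/
theorem transfer_function_factorization_core {h e es : ℕ}
    (N M : Matrix (Fin h) (Fin h) ℂ) (V : Matrix (Fin h) (Fin e) ℂ)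
    (C : Matrix (Fin es) (Fin h) ℂ) (D : Matrix (Fin es) (Fin e) ℂ)
    (F : Matrix (Fin e) (Fin h) ℂ)
    (hN : IsUnit N.det) (hM : IsUnit M.det)
    (hMVF : M + V * F = N) :
    (D + C * N⁻¹ * V) * (1 + F * M⁻¹ * V) = D + (C + D * F) * M⁻¹ * V := by
  have h1 : N * (M⁻¹ * V) = V + V * F * (M⁻¹ * V) := by
    rw [← hMVF, Matrix.add_mul, ← Matrix.mul_assoc, ← Matrix.mul_assoc,
      Matrix.mul_nonsing_inv M hM, Matrix.one_mul, Matrix.mul_assoc]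
  have h2 : N⁻¹ * (V + V * F * (M⁻¹ * V)) = M⁻¹ * V := by
    rw [← h1, ← Matrix.mul_assoc, Matrix.nonsing_inv_mul N hN, Matrix.one_mul]
  have h3 : C * N⁻¹ * (V + V * F * (M⁻¹ * V)) = C * (M⁻¹ * V) := by
    rw [Matrix.mul_assoc, h2]
  calc (D + C * N⁻¹ * V) * (1 + F * M⁻¹ * V)
      = D + D * F * M⁻¹ * V + C * N⁻¹ * (V + V * F * (M⁻¹ * V)) := by
        simp only [Matrix.mul_add, Matrix.add_mul, Matrix.mul_one, Matrix.mul_assoc]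
        abel
    _ = D + (C + D * F) * M⁻¹ * V := by
        rw [h3]
        simp only [Matrix.add_mul, Matrix.mul_assoc]
        abel
end

section
/- Let A1, A2 : ℋ → ℋ commute, C : ℋ → ℰ*, and suppose there exist linear maps E1, E2, M0, M1 : ℰ* → ℰ* with C A1 = E1 C + E2 C A_ξ and C A2 = M0 C + M1 C A_ξ, where A_ξ = ξ1 A1 + ξ2 A2 for fixed scalars ξ1, ξ2. Then for all n1, n2 ≥ 0, C A1^{n1} A2^{n2} is a linear combination (with operator coefficients on the left) of C, C A_ξ, …, C A_ξ^{n1+n2}; consequently ⋂_{k=0}^{n1+n2} ker(C A_ξ^k) ⊆ ker(C A1^{n1} A2^{n2}). -/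
/-!
Write `L_N` for the set of matrices `∑_{k ≤ N} E_k C A^k`. It is closed under addition and under
left multiplication, and contains `C A^k` for `k ≤ N`. If `B` commutes with `A` and
`C B = P C + Q C A`, then `C A^k B = C B A^k = P C A^k + Q C A^{k+1}`, so right multiplication by
`B` maps `L_N` into `L_{N+1}`. Applied to `A = A_ξ` and `B = A1, A2`, starting
from `C ∈ L_0`, this puts `C A1^{n1} A2^{n2}` in `L_{n1+n2}`; every element of `L_N` vanishes on
the common kernel of the `C A^k`, `k ≤ N`.
-/

open Finset Matrix

variable {m n R : Type*} [Fintype m] [Fintype n] [DecidableEq n] [Semiring R]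

-- An additive submonoid rather than a submodule: Mathlib has no left module structure of
-- `Matrix m m R` on `Matrix m n R`.
def leftPowSpan (C : Matrix m n R) (A : Matrix n n R) (N : ℕ) : AddSubmonoid (Matrix m n R) where
  carrier := {X | ∃ E : ℕ → Matrix m m R, X = ∑ k ∈ range (N + 1), E k * (C * A ^ k)}
  zero_mem' := ⟨0, by simp⟩
  add_mem' := by
    rintro _ _ ⟨E, rfl⟩ ⟨F, rfl⟩
    exact ⟨E + F, by simp only [Pi.add_apply, Matrix.add_mul, sum_add_distrib]⟩

namespace leftPowSpan

variable {C : Matrix m n R} {A : Matrix n n R} {N : ℕ} {X : Matrix m n R}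

theorem mul_mem (Y : Matrix m m R) (hX : X ∈ leftPowSpan C A N) :
    Y * X ∈ leftPowSpan C A N := by
  obtain ⟨E, rfl⟩ := hX
  exact ⟨fun k => Y * E k, by simp only [Matrix.mul_sum, Matrix.mul_assoc]⟩

theorem mul_pow_mem [DecidableEq m] {k : ℕ} (hk : k ≤ N) : C * A ^ k ∈ leftPowSpan C A N :=
  ⟨Pi.single k 1, by
    rw [sum_eq_single_of_mem k (mem_range.2 (Nat.lt_succ_of_le hk))]
    · simp
    · intro j _ hj
      simp [hj]⟩

theorem mul_pow_mul_eq {B : Matrix n n R} {P Q : Matrix m m R} (hAB : Commute A B)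
    (hB : C * B = P * C + Q * (C * A)) (k : ℕ) :
    C * A ^ k * B = P * (C * A ^ k) + Q * (C * A ^ (k + 1)) := by
  rw [Matrix.mul_assoc, (hAB.pow_left k).eq, ← Matrix.mul_assoc, hB, Matrix.add_mul,
    Matrix.mul_assoc, Matrix.mul_assoc, Matrix.mul_assoc, ← pow_succ']

theorem mul_mem_succ [DecidableEq m] {B : Matrix n n R} {P Q : Matrix m m R} (hAB : Commute A B)
    (hB : C * B = P * C + Q * (C * A)) (hX : X ∈ leftPowSpan C A N) :
    X * B ∈ leftPowSpan C A (N + 1) := by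
  obtain ⟨E, rfl⟩ := hX
  rw [Matrix.sum_mul]
  refine AddSubmonoid.sum_mem _ fun k hk => ?_
  have hk : k ≤ N := Nat.lt_succ_iff.1 (mem_range.1 hk)
  rw [Matrix.mul_assoc, mul_pow_mul_eq hAB hB, Matrix.mul_add]
  exact add_mem (mul_mem _ (mul_mem _ (mul_pow_mem (by omega))))
    (mul_mem _ (mul_mem _ (mul_pow_mem (by omega))))

theorem mul_pow_mem_add [DecidableEq m] {B : Matrix n n R} {P Q : Matrix m m R}
    (hAB : Commute A B) (hB : C * B = P * C + Q * (C * A)) (hX : X ∈ leftPowSpan C A N)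
    (j : ℕ) :
    X * B ^ j ∈ leftPowSpan C A (N + j) := by
  induction j with
  | zero => simpa using hX
  | succ j ih =>
    simpa only [pow_succ, ← Matrix.mul_assoc, ← add_assoc] using mul_mem_succ hAB hB ih

theorem self_mem [DecidableEq m] : C ∈ leftPowSpan C A 0 := by
  simpa using mul_pow_mem (C := C) (A := A) (le_refl 0)

theorem iInf_ker_le_ker {S : Type*} [CommSemiring S] {C : Matrix m n S} {A : Matrix n n S}
    {N : ℕ} {X : Matrix m n S} (hX : X ∈ leftPowSpan C A N) :
    ⨅ k ∈ range (N + 1), LinearMap.ker (C * A ^ k).mulVecLin ≤ LinearMap.ker X.mulVecLin := by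
  obtain ⟨E, rfl⟩ := hX
  intro x hx
  simp only [Submodule.mem_iInf, LinearMap.mem_ker, mulVecLin_apply] at hx ⊢
  rw [sum_mulVec]
  exact sum_eq_zero fun k hk => by rw [← mulVec_mulVec, hx k hk, mulVec_zero]

theorem exists_fin_sum_eq (hX : X ∈ leftPowSpan C A N) :
    ∃ E : Fin (N + 1) → Matrix m m R, X = ∑ k : Fin (N + 1), E k * (C * A ^ (k : ℕ)) := by
  obtain ⟨E, rfl⟩ := hX
  exact ⟨fun k => E k, (Fin.sum_univ_eq_sum_range (fun k => E k * (C * A ^ k)) _).symm⟩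

end leftPowSpan

/-- if C A1 and C A2 are left-operator-combinations of C and C A_ξ,
then C A1^{n1} A2^{n2} is a left-operator-combination of C, C A_ξ, …, C A_ξ^{n1+n2};
consequently ⋂_{k ≤ n1+n2} ker(C A_ξ^k) ⊆ ker(C A1^{n1} A2^{n2}). -/
theorem observability_reduction {h e : ℕ}
    (A1 A2 : Matrix (Fin h) (Fin h) ℂ) (C : Matrix (Fin e) (Fin h) ℂ)
    (hcomm : A1 * A2 = A2 * A1) (ξ1 ξ2 : ℂ)
    (E1 E2 M0 M1 : Matrix (Fin e) (Fin e) ℂ)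
    (h1 : C * A1 = E1 * C + E2 * (C * (ξ1 • A1 + ξ2 • A2)))
    (h2 : C * A2 = M0 * C + M1 * (C * (ξ1 • A1 + ξ2 • A2))) :
    ∀ n1 n2 : ℕ,
      (∃ Ek : Fin (n1 + n2 + 1) → Matrix (Fin e) (Fin e) ℂ,
        C * A1 ^ n1 * A2 ^ n2 =
          ∑ k : Fin (n1 + n2 + 1), Ek k * (C * (ξ1 • A1 + ξ2 • A2) ^ (k : ℕ))) ∧
      (⨅ k ∈ Finset.range (n1 + n2 + 1),
          LinearMap.ker (C * (ξ1 • A1 + ξ2 • A2) ^ k).mulVecLin) ≤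
        LinearMap.ker (C * A1 ^ n1 * A2 ^ n2).mulVecLin := by
  intro n1 n2
  have hc : Commute A1 A2 := hcomm
  have hc1 : Commute (ξ1 • A1 + ξ2 • A2) A1 :=
    ((Commute.refl A1).smul_left ξ1).add_left (hc.symm.smul_left ξ2)
  have hc2 : Commute (ξ1 • A1 + ξ2 • A2) A2 :=
    (hc.smul_left ξ1).add_left ((Commute.refl A2).smul_left ξ2)
  have hmem : C * A1 ^ n1 * A2 ^ n2 ∈ leftPowSpan C (ξ1 • A1 + ξ2 • A2) (n1 + n2) := by
    have := leftPowSpan.mul_pow_mem_add hc1 h1 leftPowSpan.self_mem n1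
    rw [zero_add] at this
    exact leftPowSpan.mul_pow_mem_add hc2 h2 this n2
  exact ⟨leftPowSpan.exists_fin_sum_eq hmem, leftPowSpan.iInf_ker_le_ker hmem⟩
end

section
/- Let (A1, A2, C, σ1*, σ2*, γ*) satisfy the vessel condition σ2* C A1 − σ1* C A2 + γ* C = 0, and suppose the vessel is observable, i.e., ⋂_{n1,n2 ≥ 0} ker(C A1^{n1} A2^{n2}) = {0}. Let ξ = (ξ1, ξ2) with ξ1 ≠ 0, ξ2 ≠ 0 be a regular direction, i.e., σ*ξ = ξ1 σ1* + ξ2 σ2* is invertible. Then the pair (C, A_ξ) with A_ξ = ξ1 A1 + ξ2 A2 is observable: ⋂_{n ≥ 0} ker(C A_ξ^n) = {0}. -/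
/-- an observable vessel restricted to a regular direction
yields an observable pair (C, A_ξ). -/
theorem restricted_observability {h es : ℕ}
    (A1 A2 : Matrix (Fin h) (Fin h) ℂ) (hcomm : A1 * A2 = A2 * A1)
    (C : Matrix (Fin es) (Fin h) ℂ)
    (σ1s σ2s γs : Matrix (Fin es) (Fin es) ℂ)
    (hA3 : σ2s * C * A1 - σ1s * C * A2 + γs * C = 0)
    (hobs : (⨅ (n1 : ℕ) (n2 : ℕ),
        LinearMap.ker (C * A1 ^ n1 * A2 ^ n2).mulVecLin) = ⊥)
    (ξ1 ξ2 : ℂ) (hξ1 : ξ1 ≠ 0) (hξ2 : ξ2 ≠ 0)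
    (hreg : IsUnit (ξ1 • σ1s + ξ2 • σ2s)) :
    (⨅ n : ℕ, LinearMap.ker (C * (ξ1 • A1 + ξ2 • A2) ^ n).mulVecLin) = ⊥ := by
  set Aξ : Matrix (Fin h) (Fin h) ℂ := ξ1 • A1 + ξ2 • A2 with hAξ
  have c12 : Commute A1 A2 := hcomm
  have c1ξ : Commute A1 Aξ := ((Commute.refl A1).smul_right ξ1).add_right (c12.smul_right ξ2)
  have c2ξ : Commute A2 Aξ := ((c12.symm).smul_right ξ1).add_right ((Commute.refl A2).smul_right ξ2)
  have hA3' : σ2s * (C * A1) - σ1s * (C * A2) + γs * C = 0 := by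
    rw [← Matrix.mul_assoc, ← Matrix.mul_assoc]; exact hA3
  -- key vessel identities
  have key1 : (ξ1 • σ1s + ξ2 • σ2s) * (C * A1) = σ1s * (C * Aξ) - ξ2 • (γs * C) := by
    have h2 : ξ2 • (σ2s * (C * A1)) - ξ2 • (σ1s * (C * A2)) + ξ2 • (γs * C) = 0 := by
      rw [← smul_sub, ← smul_add, hA3', smul_zero]
    rw [hAξ, ← sub_eq_zero]
    simp only [Matrix.add_mul, Matrix.mul_add, Matrix.smul_mul, Matrix.mul_smul,
      Matrix.mul_assoc]
    rw [← h2]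
    abel
  have key2 : (ξ1 • σ1s + ξ2 • σ2s) * (C * A2) = σ2s * (C * Aξ) + ξ1 • (γs * C) := by
    have h2 : ξ1 • (σ1s * (C * A2)) - ξ1 • (σ2s * (C * A1)) - ξ1 • (γs * C) = 0 := by
      have h0 : σ1s * (C * A2) - σ2s * (C * A1) - γs * C =
          -(σ2s * (C * A1) - σ1s * (C * A2) + γs * C) := by abel
      rw [← smul_sub, ← smul_sub, h0, hA3', neg_zero, smul_zero]
    rw [hAξ, ← sub_eq_zero]
    simp only [Matrix.add_mul, Matrix.mul_add, Matrix.smul_mul, Matrix.mul_smul,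
      Matrix.mul_assoc]
    rw [← h2]
    abel
  -- cancellation of the invertible σξ
  obtain ⟨u, hu⟩ := hreg
  have cancel : ∀ v : Fin es → ℂ, (ξ1 • σ1s + ξ2 • σ2s).mulVec v = 0 → v = 0 := by
    intro v hv
    have h1 : (((u⁻¹ : (Matrix (Fin es) (Fin es) ℂ)ˣ) : Matrix (Fin es) (Fin es) ℂ) *
        ((u : (Matrix (Fin es) (Fin es) ℂ)ˣ) : Matrix (Fin es) (Fin es) ℂ)).mulVec v = 0 := by
      rw [← Matrix.mulVec_mulVec, hu, hv, Matrix.mulVec_zero]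
    rwa [Units.inv_mul, Matrix.one_mulVec] at h1
  -- reshuffling lemma
  have shuffleξ : ∀ a b m : ℕ, Aξ * (A1 ^ a * (A2 ^ b * Aξ ^ m)) = A1 ^ a * (A2 ^ b * Aξ ^ (m + 1)) := by
    intro a b m
    rw [← Matrix.mul_assoc, (c1ξ.symm.pow_right a).eq, Matrix.mul_assoc, ← Matrix.mul_assoc Aξ,
      (c2ξ.symm.pow_right b).eq, Matrix.mul_assoc, ← pow_succ']
  rw [Submodule.eq_bot_iff]
  intro x hx
  simp only [Submodule.mem_iInf, LinearMap.mem_ker, Matrix.mulVecLin_apply] at hx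
  have zstep : ∀ (τ : Matrix (Fin es) (Fin es) ℂ) (N : Matrix (Fin es) (Fin h) ℂ),
      N.mulVec x = 0 → (τ * N).mulVec x = 0 := by
    intro τ N hN; rw [← Matrix.mulVec_mulVec, hN, Matrix.mulVec_zero]
  have main : ∀ k n1 n2 m : ℕ, n1 + n2 ≤ k →
      (C * (A1 ^ n1 * (A2 ^ n2 * Aξ ^ m))).mulVec x = 0 := by
    intro k
    induction k with
    | zero =>
      intro n1 n2 m hle
      obtain ⟨h1, h2⟩ : n1 = 0 ∧ n2 = 0 := by omega
      subst h1; subst h2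
      simpa using hx m
    | succ k ih =>
      intro n1 n2 m hle
      match n1, hle with
      | 0, hle =>
        match n2, hle with
        | 0, _ =>
          simpa using hx m
        | n2' + 1, hle =>
          have e : C * (A1 ^ 0 * (A2 ^ (n2' + 1) * Aξ ^ m)) =
              (C * A2) * (A1 ^ 0 * (A2 ^ n2' * Aξ ^ m)) := by
            simp only [pow_zero, one_mul, pow_succ', Matrix.mul_assoc]
          rw [e, ← Matrix.mulVec_mulVec]
          apply cancel
          rw [Matrix.mulVec_mulVec, Matrix.mulVec_mulVec, key2, Matrix.add_mul,
            Matrix.add_mulVec]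
          have t1 : (σ2s * (C * Aξ) * (A1 ^ 0 * (A2 ^ n2' * Aξ ^ m))).mulVec x = 0 := by
            rw [Matrix.mul_assoc, Matrix.mul_assoc, shuffleξ]
            exact zstep _ _ (ih 0 n2' (m + 1) (by omega))
          have t2 : ((ξ1 • (γs * C)) * (A1 ^ 0 * (A2 ^ n2' * Aξ ^ m))).mulVec x = 0 := by
            rw [Matrix.smul_mul, Matrix.mul_assoc, Matrix.smul_mulVec,
              zstep _ _ (ih 0 n2' m (by omega)), smul_zero]
          rw [t1, t2, add_zero]
      | n1' + 1, hle =>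
        have e : C * (A1 ^ (n1' + 1) * (A2 ^ n2 * Aξ ^ m)) =
            (C * A1) * (A1 ^ n1' * (A2 ^ n2 * Aξ ^ m)) := by
          simp only [pow_succ', Matrix.mul_assoc]
        rw [e, ← Matrix.mulVec_mulVec]
        apply cancel
        rw [Matrix.mulVec_mulVec, Matrix.mulVec_mulVec, key1, Matrix.sub_mul,
          Matrix.sub_mulVec]
        have t1 : (σ1s * (C * Aξ) * (A1 ^ n1' * (A2 ^ n2 * Aξ ^ m))).mulVec x = 0 := by
          rw [Matrix.mul_assoc, Matrix.mul_assoc, shuffleξ]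
          exact zstep _ _ (ih n1' n2 (m + 1) (by omega))
        have t2 : ((ξ2 • (γs * C)) * (A1 ^ n1' * (A2 ^ n2 * Aξ ^ m))).mulVec x = 0 := by
          rw [Matrix.smul_mul, Matrix.mul_assoc, Matrix.smul_mulVec,
            zstep _ _ (ih n1' n2 m (by omega)), smul_zero]
        rw [t1, t2, sub_zero]
  have hx2 : ∀ n1 n2 : ℕ, (C * A1 ^ n1 * A2 ^ n2).mulVec x = 0 := by
    intro n1 n2
    have := main (n1 + n2) n1 n2 0 le_rfl
    simpa [Matrix.mul_assoc] using this
  have hmem : x ∈ (⨅ (n1 : ℕ) (n2 : ℕ), LinearMap.ker (C * A1 ^ n1 * A2 ^ n2).mulVecLin) := by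
    simp only [Submodule.mem_iInf, LinearMap.mem_ker, Matrix.mulVecLin_apply]
    exact hx2
  rw [hobs] at hmem
  simpa using hmem
end

section
/- Let (A1, A2, B̃, σ1, σ2, γ) satisfy A1 A2 = A2 A1 and A1 B̃ σ2 − A2 B̃ σ1 + B̃ γ = 0, and suppose the vessel is controllable: the span of the images of A1^{n1} A2^{n2} B̃ over all n1, n2 ≥ 0 equals ℋ. Let ξ = (ξ1, ξ2) with ξ1 ≠ 0, ξ2 ≠ 0 and σ_ξ = ξ1 σ1 + ξ2 σ2 invertible. Then, setting A_ξ = ξ1 A1 + ξ2 A2 and B_ξ = B̃(ξ1 σ1 + ξ2 σ2), the pair (A_ξ, B_ξ) is controllable: ∑_{n ≥ 0} Im(A_ξ^n B_ξ) = ℋ. -/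
private lemma range_mul_le' {h e f : ℕ} (X : Matrix (Fin h) (Fin e) ℂ)
    (Y : Matrix (Fin e) (Fin f) ℂ) :
    LinearMap.range (X * Y).mulVecLin ≤ LinearMap.range X.mulVecLin := by
  rw [Matrix.mulVecLin_mul]
  exact LinearMap.range_comp_le_range _ _

private lemma range_add_le' {h e : ℕ} (X Y : Matrix (Fin h) (Fin e) ℂ) :
    LinearMap.range (X + Y).mulVecLin ≤
      LinearMap.range X.mulVecLin ⊔ LinearMap.range Y.mulVecLin := by
  rintro x ⟨v, rfl⟩
  rw [Matrix.mulVecLin_apply, Matrix.add_mulVec]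
  exact Submodule.add_mem _ (Submodule.mem_sup_left ⟨v, rfl⟩) (Submodule.mem_sup_right ⟨v, rfl⟩)

/-- a controllable vessel restricted to a regular direction
yields a controllable pair (A_ξ, B_ξ). -/
theorem restricted_controllability {h e : ℕ}
    (A1 A2 : Matrix (Fin h) (Fin h) ℂ) (B : Matrix (Fin h) (Fin e) ℂ)
    (σ1 σ2 γ : Matrix (Fin e) (Fin e) ℂ)
    (hA1 : A1 * A2 = A2 * A1)
    (hA2 : A1 * B * σ2 - A2 * B * σ1 + B * γ = 0)
    (hcontr : (⨆ (n1 : ℕ) (n2 : ℕ),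
        LinearMap.range (A1 ^ n1 * A2 ^ n2 * B).mulVecLin) = ⊤)
    (ξ1 ξ2 : ℂ) (hξ1 : ξ1 ≠ 0) (hξ2 : ξ2 ≠ 0)
    (hreg : IsUnit (ξ1 • σ1 + ξ2 • σ2)) :
    (⨆ n : ℕ,
      LinearMap.range ((ξ1 • A1 + ξ2 • A2) ^ n * (B * (ξ1 • σ1 + ξ2 • σ2))).mulVecLin)
      = ⊤ := by
  have hdet : IsUnit (ξ1 • σ1 + ξ2 • σ2).det :=
    (Matrix.isUnit_iff_isUnit_det _).mp hreg
  set σ := ξ1 • σ1 + ξ2 • σ2 with hσd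
  set A := ξ1 • A1 + ξ2 • A2 with hAd
  set si := σ⁻¹ with hsid
  have hσ : σ * si = 1 := Matrix.mul_nonsing_inv σ hdet
  set N : Submodule ℂ (Fin h → ℂ) :=
    ⨆ n : ℕ, LinearMap.range ((A ^ n * B).mulVecLin) with hN
  -- commutation
  have hcomm1 : A1 * A = A * A1 := by
    simp only [hAd, mul_add, add_mul, Matrix.mul_smul, Matrix.smul_mul, hA1]
  have hcomm2 : A2 * A = A * A2 := by
    simp only [hAd, mul_add, add_mul, Matrix.mul_smul, Matrix.smul_mul, ← hA1]
  -- linkage rearranged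
  have h3 : A1 * B * σ2 = A2 * B * σ1 - B * γ := by
    rw [sub_add, sub_eq_zero] at hA2
    exact hA2
  have h3' : A2 * B * σ1 = A1 * B * σ2 + B * γ := sub_eq_iff_eq_add.mp h3.symm
  have hlin1 : A1 * B * σ = A * B * σ1 + (-ξ2) • (B * γ) := by
    simp only [hσd, hAd, Matrix.mul_add, Matrix.add_mul, Matrix.mul_smul, Matrix.smul_mul]
    rw [h3]
    module
  have hlin2 : A2 * B * σ = A * B * σ2 + ξ1 • (B * γ) := by
    simp only [hσd, hAd, Matrix.mul_add, Matrix.add_mul, Matrix.mul_smul, Matrix.smul_mul]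
    rw [h3']
    module
  have mkkey : ∀ (Ai : Matrix (Fin h) (Fin h) ℂ) (c : ℂ) (σi : Matrix (Fin e) (Fin e) ℂ),
      Ai * B * σ = A * B * σi + c • (B * γ) →
      Ai * B = A * B * (σi * si) + B * (c • (γ * si)) := by
    intro Ai c σi hl
    have h4 : Ai * B = (A * B * σi + c • (B * γ)) * si := by
      rw [← hl, Matrix.mul_assoc (Ai * B) σ si, hσ, Matrix.mul_one]
    rw [h4, Matrix.add_mul, Matrix.smul_mul, Matrix.mul_assoc (A * B) σi si,
      Matrix.mul_assoc B γ si, Matrix.mul_smul]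
  have key1 := mkkey A1 (-ξ2) σ1 hlin1
  have key2 := mkkey A2 ξ1 σ2 hlin2
  -- invariance of N
  have step : ∀ (Ai : Matrix (Fin h) (Fin h) ℂ), Ai * A = A * Ai →
      (∃ C1 C2 : Matrix (Fin e) (Fin e) ℂ, Ai * B = A * B * C1 + B * C2) →
      Submodule.map Ai.mulVecLin N ≤ N := by
    rintro Ai hc ⟨C1, C2, hkey⟩
    rw [hN, Submodule.map_iSup]
    apply iSup_le; intro n
    rw [← LinearMap.range_comp, ← Matrix.mulVecLin_mul]
    have hcn : Ai * A ^ n = A ^ n * Ai := (Commute.pow_right hc n)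
    have hexp : Ai * (A ^ n * B) = (A ^ (n + 1) * B) * C1 + (A ^ n * B) * C2 := by
      calc Ai * (A ^ n * B) = (Ai * A ^ n) * B := (Matrix.mul_assoc Ai (A ^ n) B).symm
        _ = A ^ n * (Ai * B) := by rw [hcn, Matrix.mul_assoc]
        _ = A ^ n * (A * B * C1 + B * C2) := by rw [hkey]
        _ = (A ^ (n + 1) * B) * C1 + (A ^ n * B) * C2 := by
            rw [Matrix.mul_add]
            simp only [← Matrix.mul_assoc]
            rw [← pow_succ]
    rw [hexp]
    refine le_trans (range_add_le' _ _) (sup_le ?_ ?_)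
    · exact le_trans (range_mul_le' _ _) (le_iSup (fun k : ℕ => LinearMap.range ((A ^ k * B).mulVecLin)) (n + 1))
    · exact le_trans (range_mul_le' _ _) (le_iSup (fun k : ℕ => LinearMap.range ((A ^ k * B).mulVecLin)) n)
  have hmap1 : Submodule.map A1.mulVecLin N ≤ N :=
    step A1 hcomm1 ⟨_, _, key1⟩
  have hmap2 : Submodule.map A2.mulVecLin N ≤ N :=
    step A2 hcomm2 ⟨_, _, key2⟩
  have hB : LinearMap.range B.mulVecLin ≤ N := by
    have := le_iSup (fun n : ℕ => LinearMap.range ((A ^ n * B).mulVecLin)) 0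
    simpa [hN] using this
  have h2 : ∀ n2 : ℕ, LinearMap.range ((A2 ^ n2 * B).mulVecLin) ≤ N := by
    intro n2
    induction n2 with
    | zero => simpa using hB
    | succ m ih =>
        have heq : A2 ^ (m + 1) * B = A2 * (A2 ^ m * B) := by
          rw [pow_succ', Matrix.mul_assoc]
        rw [heq, Matrix.mulVecLin_mul, LinearMap.range_comp]
        exact le_trans (Submodule.map_mono ih) hmap2
  have hBi : ∀ n1 n2 : ℕ, LinearMap.range ((A1 ^ n1 * A2 ^ n2 * B).mulVecLin) ≤ N := by
    intro n1
    induction n1 with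
    | zero => intro n2; simpa using h2 n2
    | succ m ih =>
        intro n2
        have heq : A1 ^ (m + 1) * A2 ^ n2 * B = A1 * (A1 ^ m * A2 ^ n2 * B) := by
          rw [pow_succ']
          simp only [mul_assoc, Matrix.mul_assoc]
        rw [heq, Matrix.mulVecLin_mul, LinearMap.range_comp]
        exact le_trans (Submodule.map_mono (ih n2)) hmap1
  -- identify the goal's iSup with N
  have hrfix : ∀ n : ℕ,
      LinearMap.range ((A ^ n * (B * σ)).mulVecLin) =
        LinearMap.range ((A ^ n * B).mulVecLin) := by
    intro n
    apply le_antisymm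
    · rw [← Matrix.mul_assoc]
      exact range_mul_le' _ _
    · have hx : A ^ n * B = (A ^ n * (B * σ)) * si := by
        rw [Matrix.mul_assoc (A ^ n) (B * σ) si, Matrix.mul_assoc B σ si, hσ, Matrix.mul_one]
      rw [hx]
      exact range_mul_le' _ _
  calc (⨆ n : ℕ, LinearMap.range ((A ^ n * (B * σ)).mulVecLin))
      = N := by rw [hN]; exact iSup_congr hrfix
    _ = ⊤ := by
        refine top_unique ?_
        rw [← hcontr]
        exact iSup_le fun n1 => iSup_le fun n2 => hBi n1 n2
end
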